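/- Let G be a connected half-transitive multigraph with bipartition V₁ ∪ V₂ and δ(G) ≥ 2μ(G). If G is not λ'-optimal, then any two distinct λ'-atoms A and B of G satisfy |A| = |B| ≥ 3 and A ∩ B = ∅. -/

import Mathlib

/-- A multigraph: multiple edges allowed (recorded as edge multiplicities), no loops. -/
structure Multigraph (V : Type*) where
  mult : V → V → ℕ
  symm : ∀ u v, mult u v = mult v u
  loopless : ∀ v, mult v v = 0

namespace Multigraph

variable {V : Type*}

/-- Adjacency: at least one edge between `u` and `v`. -/
def Adj (G : Multigraph V) (u v : V) : Prop := 0 < G.mult u v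

instance (G : Multigraph V) (v : V) : DecidablePred (G.Adj v) :=
  fun u => inferInstanceAs (Decidable (0 < G.mult v u))

/-- Reachability by walks. -/
def Reachable (G : Multigraph V) : V → V → Prop := Relation.ReflTransGen G.Adj

/-- A multigraph is connected if it is nonempty and every two vertices are joined by a walk. -/
def Connected (G : Multigraph V) : Prop := Nonempty V ∧ ∀ u v, G.Reachable u v

/-- An automorphism of a multigraph: a permutation preserving all edge multiplicities. -/
def Aut (G : Multigraph V) : Type _ :=
  {e : Equiv.Perm V // ∀ u v, G.mult (e u) (e v) = G.mult u v}

/-- A set of edges of `G`, given by sub-multiplicities. -/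
structure EdgeSub (G : Multigraph V) where
  f : V → V → ℕ
  symm : ∀ u v, f u v = f v u
  le : ∀ u v, f u v ≤ G.mult u v

/-- The multigraph obtained by deleting the edge set `F`. -/
def deleteEdges (G : Multigraph V) (F : G.EdgeSub) : Multigraph V where
  mult u v := G.mult u v - F.f u v
  symm u v := by try dsimp only
                 rw [G.symm u v, F.symm u v]
  loopless v := by simp [G.loopless v]

/-- `F` is an edge-cut if removing it disconnects `G`. -/
def IsEdgeCut (G : Multigraph V) (F : G.EdgeSub) : Prop := ¬ (G.deleteEdges F).Connected

/-- `F` is a restricted edge-cut if removing it disconnects `G` and leaves no isolated vertex. -/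
def IsRestrictedEdgeCut (G : Multigraph V) (F : G.EdgeSub) : Prop :=
  G.IsEdgeCut F ∧ ∀ v, ∃ u, (G.deleteEdges F).Adj v u

/-- `G` is bipartite with parts `V₁`, `V₂`. -/
def IsBipartition [DecidableEq V] [Fintype V] (G : Multigraph V) (V₁ V₂ : Finset V) : Prop :=
  Disjoint V₁ V₂ ∧ V₁ ∪ V₂ = Finset.univ ∧ ∀ u v, G.Adj u v → (u ∈ V₁ ↔ v ∈ V₂)

/-- A bipartite multigraph is half-transitive if `Aut G` is transitive on each part. -/
def IsHalfTransitive [DecidableEq V] [Fintype V] (G : Multigraph V) (V₁ V₂ : Finset V) : Prop :=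
  G.IsBipartition V₁ V₂ ∧
  (∀ u ∈ V₁, ∀ v ∈ V₁, ∃ e : G.Aut, e.1 u = v) ∧
  (∀ u ∈ V₂, ∀ v ∈ V₂, ∃ e : G.Aut, e.1 u = v)

/-- An imprimitive block for `Aut G`. -/
def IsImprimitiveBlock [DecidableEq V] (G : Multigraph V) (A : Finset V) [Fintype V] : Prop :=
  A.Nonempty ∧ A ≠ Finset.univ ∧
  ∀ e : G.Aut, A.image e.1 = A ∨ Disjoint (A.image e.1) A

/-- The induced sub-multigraph on a vertex set `S`. -/
def induce (G : Multigraph V) (S : Finset V) : Multigraph {x // x ∈ S} where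
  mult a b := G.mult a.1 b.1
  symm a b := G.symm a.1 b.1
  loopless a := G.loopless a.1

section Fin

variable [Fintype V] [DecidableEq V]

/-- The degree of a vertex (counting multiplicities). -/
def degree (G : Multigraph V) (v : V) : ℕ := ∑ u, G.mult v u

/-- The minimum degree `δ(G)`. -/
noncomputable def minDegree (G : Multigraph V) : ℕ := sInf {n | ∃ v, G.degree v = n}

/-- The maximum edge multiplicity `μ(G)`. -/
def maxMult (G : Multigraph V) : ℕ := Finset.univ.sup fun p : V × V => G.mult p.1 p.2

/-- `d(A)`: the number of edges between `A` and its complement. -/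
def cut (G : Multigraph V) (A : Finset V) : ℕ := ∑ u ∈ A, ∑ v ∈ Aᶜ, G.mult u v

/-- The number of edges in an edge set. -/
def EdgeSub.card {G : Multigraph V} (F : G.EdgeSub) : ℕ := (∑ u, ∑ v, F.f u v) / 2

/-- The edge-boundary `N(A)` of a vertex set `A`, as an edge set. -/
def boundary (G : Multigraph V) (A : Finset V) : G.EdgeSub where
  f u v := if (u ∈ A ∧ v ∉ A) ∨ (v ∈ A ∧ u ∉ A) then G.mult u v else 0
  symm u v := by
    try dsimp only
    by_cases h1 : u ∈ A <;> by_cases h2 : v ∈ A <;> simp [h1, h2, G.symm u v]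
  le u v := by try dsimp only
               split_ifs <;> simp

/-- The edge-connectivity `λ(G)`. -/
noncomputable def edgeConn (G : Multigraph V) : ℕ :=
  sInf {n | ∃ F : G.EdgeSub, G.IsEdgeCut F ∧ F.card = n}

/-- The restricted edge-connectivity `λ'(G)`. -/
noncomputable def rEdgeConn (G : Multigraph V) : ℕ :=
  sInf {n | ∃ F : G.EdgeSub, G.IsRestrictedEdgeCut F ∧ F.card = n}

/-- The minimum edge degree `ξ(G) = min {d(u)+d(v)-2μ(uv) : uv ∈ E}`. -/
noncomputable def minEdgeDegree (G : Multigraph V) : ℕ :=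
  sInf {n | ∃ u v, G.Adj u v ∧ n = G.degree u + G.degree v - 2 * G.mult u v}

/-- A `λ`-fragment: a vertex set whose edge-boundary is a minimum edge-cut. -/
def IsFragment (G : Multigraph V) (A : Finset V) : Prop :=
  A.Nonempty ∧ Aᶜ.Nonempty ∧ G.IsEdgeCut (G.boundary A) ∧ G.cut A = G.edgeConn

/-- A `λ`-atom: a `λ`-fragment of minimum cardinality. -/
def IsAtom (G : Multigraph V) (A : Finset V) : Prop :=
  G.IsFragment A ∧ ∀ B : Finset V, G.IsFragment B → A.card ≤ B.card

/-- A strict `λ`-fragment: a `λ`-fragment `C` with `2 ≤ |C| ≤ |V| - 2`. -/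
def IsStrictFragment (G : Multigraph V) (A : Finset V) : Prop :=
  G.IsFragment A ∧ 2 ≤ A.card ∧ A.card ≤ Fintype.card V - 2

/-- A `λ`-superatom: a strict `λ`-fragment of minimum cardinality. -/
def IsSuperAtom (G : Multigraph V) (A : Finset V) : Prop :=
  G.IsStrictFragment A ∧ ∀ B : Finset V, G.IsStrictFragment B → A.card ≤ B.card

/-- A `λ'`-fragment: a vertex set whose edge-boundary is a minimum restricted edge-cut. -/
def IsRFragment (G : Multigraph V) (A : Finset V) : Prop :=
  G.IsRestrictedEdgeCut (G.boundary A) ∧ G.cut A = G.rEdgeConn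

/-- A `λ'`-atom: a `λ'`-fragment of minimum cardinality. -/
def IsRAtom (G : Multigraph V) (A : Finset V) : Prop :=
  G.IsRFragment A ∧ ∀ B : Finset V, G.IsRFragment B → A.card ≤ B.card

/-- `G` is super edge-connected if every minimum edge-cut is the set of all edges
incident with some vertex. -/
def IsSuperEdgeConnected (G : Multigraph V) : Prop :=
  ∀ F : G.EdgeSub, G.IsEdgeCut F → F.card = G.edgeConn →
    ∃ v : V, ∀ u w : V, F.f u w = if u = v ∨ w = v then G.mult u w else 0

end Fin

end Multigraph

variable {V : Type*} [Fintype V] [DecidableEq V]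

open Multigraph

/-!
If two distinct `λ'`-atoms `A`, `B` met, posimodularity `d(A \ B) + d(B \ A) ≤ d(A) + d(B) = 2λ'`
and the minimality of the atoms would forbid `A \ B` and `B \ A` from both being restricted
edge-cuts; so, say, some `w ∈ A \ B` has no neighbour in `A \ B`. Since `δ ≥ 2μ` and `λ' < ξ`,
`A - w` is a restricted edge-cut, and minimality of `A` makes `w` send more edges into `B` than out
of `A`; hence `d(B + w) < λ'`, so `V \ (B + w)` is independent (otherwise `B + w` together with the
isolated vertices of its complement would be a restricted edge-cut of size `< λ'`). This forces
`A \ B = {w}`, `B \ A = {z}` and a vertex `y ∉ A ∪ B` adjacent to both `w` and `z`, and counting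
edges gives `ξ(yw) + ξ(yz) ≤ d(A) + d(B) = 2λ' < 2ξ`.
-/

namespace Multigraph

variable {V : Type*} {G : Multigraph V}

lemma adj_comm {u v : V} : G.Adj u v ↔ G.Adj v u := by
  simp only [Adj, G.symm u v]

lemma not_adj_self (v : V) : ¬ G.Adj v v := by
  simp [Adj, G.loopless]

lemma Adj.ne {u v : V} (h : G.Adj u v) : u ≠ v := fun e => G.not_adj_self v (e ▸ h)

lemma IsRestrictedEdgeCut.exists_adj {F : G.EdgeSub} (hF : G.IsRestrictedEdgeCut F) (v : V) :
    ∃ u, G.Adj v u := by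
  obtain ⟨u, hu⟩ := hF.2 v
  exact ⟨u, lt_of_lt_of_le hu (Nat.sub_le _ _)⟩

def degreeIn (G : Multigraph V) (u : V) (T : Finset V) : ℕ := ∑ v ∈ T, G.mult u v

def NoIsolated (G : Multigraph V) (S : Finset V) : Prop := ∀ v ∈ S, ∃ u ∈ S, G.Adj v u

def IsIndependent (G : Multigraph V) (S : Finset V) : Prop := ∀ u ∈ S, ∀ v ∈ S, ¬ G.Adj u v

lemma degreeIn_pos_iff {u : V} {T : Finset V} : 0 < G.degreeIn u T ↔ ∃ v ∈ T, G.Adj u v := by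
  simp only [degreeIn, Finset.sum_pos_iff, Adj]

section DecidableEq

variable [DecidableEq V]

lemma degreeIn_le_degreeIn {u : V} {T U : Finset V} (h : ∀ v ∈ T, v ∉ U → ¬ G.Adj u v) :
    G.degreeIn u T ≤ G.degreeIn u U := by
  calc G.degreeIn u T = ∑ v ∈ T ∩ U, G.mult u v :=
        (Finset.sum_subset Finset.inter_subset_left fun v hv hvU =>
          Nat.eq_zero_of_not_pos <| h v hv fun hU => hvU (Finset.mem_inter.mpr ⟨hv, hU⟩)).symm
    _ ≤ G.degreeIn u U := Finset.sum_le_sum_of_subset Finset.inter_subset_right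

def crossing (G : Multigraph V) (S : Finset V) (u v : V) : ℕ :=
  if (u ∈ S ↔ v ∈ S) then 0 else G.mult u v

lemma boundary_f_eq_crossing (S : Finset V) : (G.boundary S).f = G.crossing S := by
  ext u v
  by_cases hu : u ∈ S <;> by_cases hv : v ∈ S <;> simp [boundary, crossing, hu, hv]

lemma deleteEdges_boundary_adj {S : Finset V} {u v : V} :
    (G.deleteEdges (G.boundary S)).Adj u v ↔ G.Adj u v ∧ (u ∈ S ↔ v ∈ S) := by
  show 0 < G.mult u v - (G.boundary S).f u v ↔ _
  by_cases hu : u ∈ S <;> by_cases hv : v ∈ S <;>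
    simp [Adj, boundary_f_eq_crossing, crossing, hu, hv]

end DecidableEq

variable [Fintype V]

lemma two_mul_mult_le_degree (hδ : 2 * G.maxMult ≤ G.minDegree) (u v : V) :
    2 * G.mult u v ≤ G.degree u := by
  have : G.mult u v ≤ G.maxMult :=
    Finset.le_sup (f := fun p : V × V => G.mult p.1 p.2) (Finset.mem_univ (u, v))
  have : G.minDegree ≤ G.degree u := Nat.sInf_le ⟨u, rfl⟩
  omega

variable [DecidableEq V]

lemma degree_eq_degreeIn_erase_add (S : Finset V) (u : V) :
    G.degree u = G.degreeIn u (S.erase u) + G.degreeIn u Sᶜ := by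
  rw [degreeIn, Finset.sum_erase _ (G.loopless u), degreeIn, degree, Finset.sum_add_sum_compl]

lemma cut_compl (S : Finset V) : G.cut Sᶜ = G.cut S := by
  rw [cut, cut, compl_compl, Finset.sum_comm]
  exact Finset.sum_congr rfl fun u _ => Finset.sum_congr rfl fun v _ => G.symm v u

lemma boundary_compl (S : Finset V) : G.boundary Sᶜ = G.boundary S := by
  have h : (G.boundary Sᶜ).f = (G.boundary S).f := by
    ext u v
    simp [boundary_f_eq_crossing, crossing, not_iff_not]
  unfold boundary at h ⊢
  simpa using h

lemma two_mul_cut (S : Finset V) : 2 * G.cut S = ∑ u, ∑ v, G.crossing S u v := by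
  have hrow : ∀ u, ∑ v, G.crossing S u v =
      if u ∈ S then G.degreeIn u Sᶜ else G.degreeIn u S := by
    intro u
    by_cases hu : u ∈ S <;>
      simp [crossing, degreeIn, hu, Finset.sum_ite, Finset.filter_not, Finset.compl_eq_univ_sdiff]
  rw [Finset.sum_congr rfl fun u _ => hrow u, Finset.sum_ite, Finset.filter_mem_eq_inter,
    Finset.filter_not, Finset.filter_mem_eq_inter, Finset.univ_inter, ← Finset.compl_eq_univ_sdiff]
  have h := G.cut_compl S
  rw [cut, compl_compl] at h
  simp only [degreeIn, cut] at *
  omega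

lemma card_boundary (S : Finset V) : (G.boundary S).card = G.cut S := by
  rw [EdgeSub.card, boundary_f_eq_crossing, ← two_mul_cut]
  omega

lemma cut_add_cut_le_of_crossing_le {S₁ S₂ T₁ T₂ : Finset V}
    (h : ∀ u v, G.crossing S₁ u v + G.crossing S₂ u v ≤ G.crossing T₁ u v + G.crossing T₂ u v) :
    G.cut S₁ + G.cut S₂ ≤ G.cut T₁ + G.cut T₂ := by
  have := Finset.sum_le_sum fun u (_ : u ∈ Finset.univ) =>
    Finset.sum_le_sum fun v (_ : v ∈ Finset.univ) => h u v
  simp only [Finset.sum_add_distrib, ← two_mul_cut] at this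
  omega

lemma cut_le_cut_of_crossing_le {S T : Finset V}
    (h : ∀ u v, G.crossing S u v ≤ G.crossing T u v) : G.cut S ≤ G.cut T := by
  simpa using G.cut_add_cut_le_of_crossing_le (S₂ := ∅) (T₂ := ∅) fun u v => by
    simpa [crossing] using h u v

lemma cut_sdiff_add_cut_sdiff_le (A B : Finset V) :
    G.cut (A \ B) + G.cut (B \ A) ≤ G.cut A + G.cut B :=
  cut_add_cut_le_of_crossing_le fun u v => by
    unfold crossing
    by_cases hu : u ∈ A <;> by_cases hu' : u ∈ B <;> by_cases hv : v ∈ A <;>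
      by_cases hv' : v ∈ B <;> simp [hu, hu', hv, hv']

lemma cut_le_cut_of_subset {S T : Finset V} (hST : S ⊆ T)
    (h : ∀ u ∈ S, ∀ v ∈ T, v ∉ S → G.mult u v = 0) : G.cut S ≤ G.cut T :=
  cut_le_cut_of_crossing_le fun u v => by
    unfold crossing
    by_cases hu : u ∈ S <;> by_cases hv : v ∈ S
    · simp [hu, hv]
    · by_cases hvT : v ∈ T
      · simp [hu, hv, h u hu v hvT hv]
      · simp [hu, hv, hST hu, hvT]
    · by_cases huT : u ∈ T
      · simp [hu, hv, G.symm u v, h v hv u huT hu]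
      · simp [hu, hv, hST hv, huT]
    · simp [hu, hv]

lemma cut_pair_add_cut_pair_le {A B : Finset V} {w z y : V} (hw : A \ B = {w})
    (hz : B \ A = {z}) (hyA : y ∉ A) (hyB : y ∉ B)
    (hy : ∀ v, v ∉ A → v ∉ B → G.mult y v = 0) :
    G.cut {y, w} + G.cut {y, z} ≤ G.cut A + G.cut B := by
  have hw' : ∀ u, u ∈ A → u ∉ B → u = w := fun u hA hB =>
    Finset.mem_singleton.mp (hw ▸ Finset.mem_sdiff.mpr ⟨hA, hB⟩)
  have hz' : ∀ u, u ∈ B → u ∉ A → u = z := fun u hB hA =>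
    Finset.mem_singleton.mp (hz ▸ Finset.mem_sdiff.mpr ⟨hB, hA⟩)
  have hwA : w ∈ A ∧ w ∉ B := Finset.mem_sdiff.mp (hw ▸ Finset.mem_singleton_self w)
  have hzB : z ∈ B ∧ z ∉ A := Finset.mem_sdiff.mp (hz ▸ Finset.mem_singleton_self z)
  have hy' : ∀ v, v ∉ A → v ∉ B → G.mult v y = 0 := fun v hvA hvB =>
    G.symm v y ▸ hy v hvA hvB
  -- the five kinds of vertices: those of `A ∩ B`, `w`, `z`, `y`, and the rest of `(A ∪ B)ᶜ`
  have hcls : ∀ u, (u ∈ A ∧ u ∈ B ∧ u ∉ ({y, w} : Finset V) ∧ u ∉ ({y, z} : Finset V)) ∨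
      (u ∈ A ∧ u ∉ B ∧ u ∈ ({y, w} : Finset V) ∧ u ∉ ({y, z} : Finset V)) ∨
      (u ∉ A ∧ u ∈ B ∧ u ∉ ({y, w} : Finset V) ∧ u ∈ ({y, z} : Finset V)) ∨
      (u = y ∧ u ∉ A ∧ u ∉ B ∧ u ∈ ({y, w} : Finset V) ∧ u ∈ ({y, z} : Finset V)) ∨
      (u ∉ A ∧ u ∉ B ∧ u ∉ ({y, w} : Finset V) ∧ u ∉ ({y, z} : Finset V)) := by
    intro u
    simp only [Finset.mem_insert, Finset.mem_singleton]
    by_cases huA : u ∈ A <;> by_cases huB : u ∈ B <;> grind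
  refine cut_add_cut_le_of_crossing_le fun u v => ?_
  unfold crossing
  rcases hcls u with ⟨hu₁, hu₂, hu₃, hu₄⟩ | ⟨hu₁, hu₂, hu₃, hu₄⟩ | ⟨hu₁, hu₂, hu₃, hu₄⟩ |
      ⟨rfl, hu₁, hu₂, hu₃, hu₄⟩ | ⟨hu₁, hu₂, hu₃, hu₄⟩ <;>
    rcases hcls v with ⟨hv₁, hv₂, hv₃, hv₄⟩ | ⟨hv₁, hv₂, hv₃, hv₄⟩ | ⟨hv₁, hv₂, hv₃, hv₄⟩ |
      ⟨rfl, hv₁, hv₂, hv₃, hv₄⟩ | ⟨hv₁, hv₂, hv₃, hv₄⟩ <;>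
    simp [hu₁, hu₂, hu₃, hu₄, hv₁, hv₂, hv₃, hv₄, hy, hy']

lemma cut_erase_add {S : Finset V} {u : V} (h : u ∈ S) :
    G.cut (S.erase u) + G.degreeIn u Sᶜ = G.cut S + G.degreeIn u (S.erase u) := by
  have hcut : G.cut (S.erase u) =
      ∑ x ∈ S.erase u, G.mult u x + ∑ x ∈ S.erase u, G.degreeIn x Sᶜ := by
    rw [cut, ← Finset.sum_add_distrib]
    refine Finset.sum_congr rfl fun x _ => ?_
    rw [Finset.compl_erase, Finset.sum_insert (by simp [h]), G.symm x u, degreeIn]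
  have hS : ∑ x ∈ S.erase u, G.degreeIn x Sᶜ + G.degreeIn u Sᶜ = G.cut S :=
    Finset.sum_erase_add _ _ h
  rw [hcut, ← hS]
  unfold degreeIn
  ring

lemma cut_insert_add {S : Finset V} {u : V} (h : u ∉ S) :
    G.cut (insert u S) + G.degreeIn u S = G.cut S + G.degreeIn u (Sᶜ.erase u) := by
  have := G.cut_erase_add (Finset.mem_insert_self u S)
  rw [Finset.erase_insert h, Finset.compl_insert] at this
  omega

lemma cut_pair_add_two_mul {u v : V} (huv : u ≠ v) :
    G.cut {u, v} + 2 * G.mult u v = G.degree u + G.degree v := by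
  have hu := G.degree_eq_degreeIn_erase_add {u, v} u
  have hv := G.degree_eq_degreeIn_erase_add {u, v} v
  rw [Finset.erase_insert (by simpa using huv), degreeIn, Finset.sum_singleton] at hu
  rw [Finset.pair_comm, Finset.erase_insert (by simpa using huv.symm), degreeIn,
    Finset.sum_singleton, Finset.pair_comm] at hv
  rw [cut, Finset.sum_pair huv, G.symm v u] at *
  simp only [degreeIn] at *
  omega

lemma minEdgeDegree_le_cut_pair {u v : V} (h : G.Adj u v) : G.minEdgeDegree ≤ G.cut {u, v} := by
  have := G.cut_pair_add_two_mul h.ne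
  have : G.minEdgeDegree ≤ G.degree u + G.degree v - 2 * G.mult u v := Nat.sInf_le ⟨u, v, h, rfl⟩
  omega

lemma isEdgeCut_boundary {S : Finset V} (hS : S.Nonempty) (hSc : Sᶜ.Nonempty) :
    G.IsEdgeCut (G.boundary S) := by
  obtain ⟨a, ha⟩ := hS
  obtain ⟨b, hb⟩ := hSc
  have hside : ∀ x, (G.deleteEdges (G.boundary S)).Reachable a x → x ∈ S := fun x hx => by
    induction hx with
    | refl => exact ha
    | tail _ hadj ih => exact (deleteEdges_boundary_adj.mp hadj).2.mp ih
  exact fun hconn => Finset.mem_compl.mp hb (hside b (hconn.2 a b))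

lemma Connected.nonempty_of_isEdgeCut_boundary (hG : G.Connected) {S : Finset V}
    (h : G.IsEdgeCut (G.boundary S)) : S.Nonempty ∧ Sᶜ.Nonempty := by
  by_contra hS
  refine h ⟨hG.1, fun a b => Relation.ReflTransGen.mono
    (fun x y (hxy : G.Adj x y) => deleteEdges_boundary_adj.mpr ⟨hxy, ?_⟩) a b (hG.2 a b)⟩
  rcases not_and_or.mp hS with hS | hS
  · simp [Finset.not_nonempty_iff_eq_empty.mp hS]
  · simp [(Finset.compl_eq_empty_iff S).mp (Finset.not_nonempty_iff_eq_empty.mp hS)]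

lemma forall_exists_adj_deleteEdges_boundary_iff {S : Finset V} :
    (∀ v, ∃ u, (G.deleteEdges (G.boundary S)).Adj v u) ↔ G.NoIsolated S ∧ G.NoIsolated Sᶜ := by
  simp only [deleteEdges_boundary_adj, NoIsolated, Finset.mem_compl]
  constructor
  · intro h
    refine ⟨fun v hv => ?_, fun v hv => ?_⟩ <;> obtain ⟨u, hadj, hu⟩ := h v
    · exact ⟨u, hu.mp hv, hadj⟩
    · exact ⟨u, fun h => hv (hu.mpr h), hadj⟩
  · rintro ⟨hS, hSc⟩ v
    by_cases hv : v ∈ S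
    · obtain ⟨u, hu, hadj⟩ := hS v hv
      exact ⟨u, hadj, iff_of_true hv hu⟩
    · obtain ⟨u, hu, hadj⟩ := hSc v hv
      exact ⟨u, hadj, iff_of_false hv hu⟩

lemma isRestrictedEdgeCut_boundary {S : Finset V} (hS : S.Nonempty) (hSc : Sᶜ.Nonempty)
    (hSi : G.NoIsolated S) (hSci : G.NoIsolated Sᶜ) : G.IsRestrictedEdgeCut (G.boundary S) :=
  ⟨isEdgeCut_boundary hS hSc, forall_exists_adj_deleteEdges_boundary_iff.mpr ⟨hSi, hSci⟩⟩

lemma IsRestrictedEdgeCut.noIsolated_boundary {S : Finset V}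
    (h : G.IsRestrictedEdgeCut (G.boundary S)) : G.NoIsolated S ∧ G.NoIsolated Sᶜ :=
  forall_exists_adj_deleteEdges_boundary_iff.mp h.2

lemma rEdgeConn_le_cut {S : Finset V} (h : G.IsRestrictedEdgeCut (G.boundary S)) :
    G.rEdgeConn ≤ G.cut S :=
  Nat.sInf_le ⟨G.boundary S, h, card_boundary S⟩

lemma IsRFragment.compl {S : Finset V} (h : G.IsRFragment S) : G.IsRFragment Sᶜ :=
  ⟨G.boundary_compl S ▸ h.1, (G.cut_compl S).trans h.2⟩

lemma IsRAtom.cut_lt {A S : Finset V} (hA : G.IsRAtom A)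
    (hS : G.IsRestrictedEdgeCut (G.boundary S)) (hcard : S.card < A.card) : G.cut A < G.cut S := by
  have hle := rEdgeConn_le_cut hS
  have hne : G.cut S ≠ G.rEdgeConn := fun h => (hA.2 S ⟨hS, h⟩).not_gt hcard
  have := hA.1.2
  omega

lemma IsRAtom.degreeIn_compl_lt {A : Finset V} {x : V} (hA : G.IsRAtom A) (hx : x ∈ A)
    (hres : G.IsRestrictedEdgeCut (G.boundary (A.erase x))) :
    G.degreeIn x Aᶜ < G.degreeIn x (A.erase x) := by
  have := hA.cut_lt hres (Finset.card_erase_lt_of_mem hx)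
  have := G.cut_erase_add hx
  omega

lemma NoIsolated.compl_erase {A : Finset V} (hAc : G.NoIsolated Aᶜ) {x : V}
    (hx : ∃ s ∈ Aᶜ, G.Adj x s) : G.NoIsolated (A.erase x)ᶜ := by
  intro t ht
  rw [Finset.compl_erase] at ht ⊢
  rcases Finset.mem_insert.mp ht with rfl | ht
  · obtain ⟨s, hs, hts⟩ := hx
    exact ⟨s, Finset.mem_insert_of_mem hs, hts⟩
  · obtain ⟨s, hs, hts⟩ := hAc t ht
    exact ⟨s, Finset.mem_insert_of_mem hs, hts⟩

lemma NoIsolated.adj_of_isIndependent {B : Finset V} (hBc : G.NoIsolated Bᶜ) {w y : V}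
    (hind : G.IsIndependent (insert w B)ᶜ) (hy : y ∉ insert w B) : G.Adj y w := by
  obtain ⟨s, hs, hys⟩ := hBc y (Finset.mem_compl.mpr fun h => hy (Finset.mem_insert_of_mem h))
  by_contra hyw
  have hsw : s ≠ w := fun h => hyw (h ▸ hys)
  exact hind y (Finset.mem_compl.mpr hy) s (by simpa [hsw] using hs) hys

/-- The cut is `U` together with the vertices isolated in `G - U`. -/
lemma exists_isRestrictedEdgeCut_cut_le (hiso : ∀ v, ∃ u, G.Adj v u) {U : Finset V}
    (hU : U.Nonempty) (hUi : G.NoIsolated U) (hUc : ¬ G.IsIndependent Uᶜ) :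
    ∃ T, G.IsRestrictedEdgeCut (G.boundary T) ∧ G.cut T ≤ G.cut U := by
  obtain ⟨x₀, hx₀, v₀, hv₀, hx₀v₀⟩ : ∃ x ∉ U, ∃ v ∉ U, G.Adj x v := by
    simpa [IsIndependent] using hUc
  set T := Finset.univ.filter fun x => x ∈ U ∨ ∀ v ∉ U, G.mult x v = 0
  have hT : ∀ x, x ∈ T ↔ x ∈ U ∨ ∀ v ∉ U, G.mult x v = 0 := by simp [T]
  refine ⟨T, isRestrictedEdgeCut_boundary ?_ ?_ ?_ ?_, cut_le_cut_of_crossing_le fun a b => ?_⟩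
  · obtain ⟨u, hu⟩ := hU
    exact ⟨u, (hT u).mpr (Or.inl hu)⟩
  · refine ⟨x₀, Finset.mem_compl.mpr fun h => ?_⟩
    rcases (hT x₀).mp h with h | h
    exacts [hx₀ h, hx₀v₀.ne' (h v₀ hv₀)]
  · intro t ht
    rcases (hT t).mp ht with h | h
    · obtain ⟨u, hu, hadj⟩ := hUi t h
      exact ⟨u, (hT u).mpr (Or.inl hu), hadj⟩
    · obtain ⟨u, hadj⟩ := hiso t
      have hu : u ∈ U := by_contra fun hu => hadj.ne' (h u hu)
      exact ⟨u, (hT u).mpr (Or.inl hu), hadj⟩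
  · intro v hv
    simp only [Finset.mem_compl, hT, not_or, not_forall] at hv
    obtain ⟨hvU, u, huU, hvu⟩ := hv
    refine ⟨u, ?_, Nat.pos_of_ne_zero hvu⟩
    simp only [Finset.mem_compl, hT, not_or, not_forall]
    exact ⟨huU, v, hvU, by rwa [G.symm]⟩
  · unfold crossing
    by_cases hab : (a ∈ U ↔ b ∈ U)
    · by_cases ha : a ∈ U
      · simp [hab, (hT a).mpr (Or.inl ha), (hT b).mpr (Or.inl (hab.mp ha))]
      have hb : b ∉ U := fun hb => ha (hab.mpr hb)
      by_cases hPa : ∀ v ∉ U, G.mult a v = 0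
      · simp [hab, hPa b hb]
      by_cases hPb : ∀ v ∉ U, G.mult b v = 0
      · simp [hab, G.symm a b, hPb a ha]
      simp [hT, ha, hb, hPa, hPb]
    · simp only [hab, if_false]
      split_ifs <;> simp
/-- Otherwise the edge `xu` would be a component of `G[A]`, and `d(A) ≥ d({x, u}) ≥ ξ`. -/
lemma IsRFragment.exists_adj_of_adj (hopt : G.rEdgeConn < G.minEdgeDegree) {A : Finset V}
    (hA : G.IsRFragment A) {x u : V} (hx : x ∈ A) (hu : u ∈ A) (hxu : G.Adj x u) :
    ∃ v ∈ A, v ≠ x ∧ v ≠ u ∧ (G.Adj x v ∨ G.Adj u v) := by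
  by_contra! h
  have hle : G.cut {x, u} ≤ G.cut A := by
    refine cut_le_cut_of_subset (Finset.insert_subset hx (Finset.singleton_subset_iff.mpr hu))
      fun a ha b hbA hb => Nat.eq_zero_of_not_pos ?_
    simp only [Finset.mem_insert, Finset.mem_singleton, not_or] at ha hb
    rcases ha with rfl | rfl
    exacts [(h b hbA hb.1 hb.2).1, (h b hbA hb.1 hb.2).2]
  have := G.minEdgeDegree_le_cut_pair hxu
  have := hA.2
  omega

lemma IsRFragment.three_le_card (hG : G.Connected) (hopt : G.rEdgeConn < G.minEdgeDegree)
    {A : Finset V} (hA : G.IsRFragment A) : 3 ≤ A.card := by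
  obtain ⟨u, hu⟩ := (hG.nonempty_of_isEdgeCut_boundary hA.1.1).1
  obtain ⟨v, hv, huv⟩ := hA.1.noIsolated_boundary.1 u hu
  obtain ⟨t, ht, htu, htv, -⟩ := hA.exists_adj_of_adj hopt hu hv huv
  calc 3 = ({t, u, v} : Finset V).card := by
        rw [Finset.card_insert_of_notMem (by simp [htu, htv]),
          Finset.card_pair huv.ne]
    _ ≤ A.card := Finset.card_le_card <|
        Finset.insert_subset ht (Finset.insert_subset hu (Finset.singleton_subset_iff.mpr hv))

lemma IsRAtom.noIsolated_erase (hδ : 2 * G.maxMult ≤ G.minDegree)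
    (hopt : G.rEdgeConn < G.minEdgeDegree) {A : Finset V} (hA : G.IsRAtom A) {u : V}
    (hu : u ∈ A) : G.NoIsolated (A.erase u) := by
  obtain ⟨hAi, hAci⟩ := hA.1.1.noIsolated_boundary
  intro x hx
  obtain ⟨hxu, hxA⟩ := Finset.mem_erase.mp hx
  by_contra! hx_iso
  have hx_only : ∀ v ∈ A, G.Adj x v → v = u := fun v hv hxv =>
    by_contra fun hvu => hx_iso v (Finset.mem_erase.mpr ⟨hvu, hv⟩) hxv
  have hxu_adj : G.Adj x u := by
    obtain ⟨v, hv, hxv⟩ := hAi x hxA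
    exact hx_only v hv hxv ▸ hxv
  obtain ⟨v', hv', hv'x, hv'u, hadj⟩ := hA.1.exists_adj_of_adj hopt hxA hu hxu_adj
  have huv' : G.Adj u v' := hadj.resolve_left fun hxv' => hv'u (hx_only v' hv' hxv')
  have hAxi : G.NoIsolated (A.erase x) := by
    intro t ht
    obtain ⟨htx, htA⟩ := Finset.mem_erase.mp ht
    obtain ⟨s, hs, hts⟩ := hAi t htA
    by_cases hsx : s = x
    · obtain rfl : t = u := hx_only t htA (adj_comm.mp (hsx ▸ hts))
      exact ⟨v', Finset.mem_erase.mpr ⟨hv'x, hv'⟩, huv'⟩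
    · exact ⟨s, Finset.mem_erase.mpr ⟨hsx, hs⟩, hts⟩
  have hdeg_in : G.degreeIn x (A.erase x) = G.mult x u :=
    Finset.sum_eq_single_of_mem u (Finset.mem_erase.mpr ⟨hxu.symm, hu⟩) fun v hv hvu =>
      Nat.eq_zero_of_not_pos fun hxv => hvu (hx_only v (Finset.mem_of_mem_erase hv) hxv)
  have hdeg_out : G.mult x u ≤ G.degreeIn x Aᶜ := by
    have := G.degree_eq_degreeIn_erase_add A x
    have := two_mul_mult_le_degree hδ x u
    omega
  have hres := isRestrictedEdgeCut_boundary ⟨u, Finset.mem_erase.mpr ⟨hxu.symm, hu⟩⟩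
    ⟨x, by simp⟩ hAxi (hAci.compl_erase (degreeIn_pos_iff.mp (hxu_adj.trans_le hdeg_out)))
  exact (hA.degreeIn_compl_lt hxA hres).not_ge (hdeg_in ▸ hdeg_out)

lemma IsRAtom.degreeIn_compl_lt_degreeIn (hG : G.Connected) (hδ : 2 * G.maxMult ≤ G.minDegree)
    (hopt : G.rEdgeConn < G.minEdgeDegree) {A B : Finset V} (hA : G.IsRAtom A)
    (hBc : G.NoIsolated Bᶜ) {w : V} (hw : w ∈ A \ B) (hw_iso : ∀ v ∈ A \ B, ¬ G.Adj w v) :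
    G.degreeIn w Aᶜ < G.degreeIn w B := by
  obtain ⟨hwA, hwB⟩ := Finset.mem_sdiff.mp hw
  have hAci := hA.1.1.noIsolated_boundary.2
  have hres : G.IsRestrictedEdgeCut (G.boundary (A.erase w)) := by
    refine isRestrictedEdgeCut_boundary ?_ ⟨w, by simp⟩ (hA.noIsolated_erase hδ hopt hwA) ?_
    · rw [← Finset.card_pos, Finset.card_erase_of_mem hwA]
      have := hA.1.three_le_card hG hopt
      omega
    obtain ⟨s, hs, hws⟩ := hBc w (Finset.mem_compl.mpr hwB)
    have hsA : s ∉ A := fun hsA => hw_iso s (Finset.mem_sdiff.mpr ⟨hsA, Finset.mem_compl.mp hs⟩) hws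
    exact hAci.compl_erase ⟨s, Finset.mem_compl.mpr hsA, hws⟩
  exact lt_of_lt_of_le (hA.degreeIn_compl_lt hwA hres) (degreeIn_le_degreeIn fun v hv hvB =>
    hw_iso v (Finset.mem_sdiff.mpr ⟨Finset.mem_of_mem_erase hv, hvB⟩))

lemma IsRAtom.isIndependent_compl_insert (hG : G.Connected) (hδ : 2 * G.maxMult ≤ G.minDegree)
    (hopt : G.rEdgeConn < G.minEdgeDegree) {A B : Finset V} (hA : G.IsRAtom A)
    (hB : G.IsRFragment B) {w : V} (hw : w ∈ A \ B) (hw_iso : ∀ v ∈ A \ B, ¬ G.Adj w v) :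
    G.IsIndependent (insert w B)ᶜ := by
  obtain ⟨hwA, hwB⟩ := Finset.mem_sdiff.mp hw
  obtain ⟨hBi, hBci⟩ := hB.1.noIsolated_boundary
  have hin := hA.degreeIn_compl_lt_degreeIn hG hδ hopt hBci hw hw_iso
  have hout : G.degreeIn w (Bᶜ.erase w) ≤ G.degreeIn w Aᶜ :=
    degreeIn_le_degreeIn fun v hv hvA => hw_iso v <| Finset.mem_sdiff.mpr
      ⟨by simpa using hvA, Finset.mem_compl.mp (Finset.mem_of_mem_erase hv)⟩
  have hcut : G.cut (insert w B) < G.rEdgeConn := by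
    have := G.cut_insert_add hwB
    have := hB.2
    omega
  have hUi : G.NoIsolated (insert w B) := by
    intro t ht
    rcases Finset.mem_insert.mp ht with rfl | ht
    · obtain ⟨s, hs, hts⟩ := degreeIn_pos_iff.mp (Nat.zero_lt_of_lt hin)
      exact ⟨s, Finset.mem_insert_of_mem hs, hts⟩
    · obtain ⟨s, hs, hts⟩ := hBi t ht
      exact ⟨s, Finset.mem_insert_of_mem hs, hts⟩
  by_contra hdep
  obtain ⟨T, hT, hTle⟩ := exists_isRestrictedEdgeCut_cut_le hB.1.exists_adj
    (Finset.insert_nonempty w B) hUi hdep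
  have := rEdgeConn_le_cut hT
  omega

lemma IsRAtom.exists_notMem_insert (hG : G.Connected) (hopt : G.rEdgeConn < G.minEdgeDegree)
    {A : Finset V} (hA : G.IsRAtom A) (z : V) : ∃ y, y ∉ insert z A := by
  by_contra! h
  have hle := Finset.card_insert_le z A
  rw [Finset.eq_univ_of_forall h, Finset.card_univ, ← Finset.card_add_card_compl A] at hle
  have := hA.2 Aᶜ hA.1.compl
  have := hA.1.three_le_card hG hopt
  omega

lemma IsRAtom.noIsolated_sdiff (hG : G.Connected) (hδ : 2 * G.maxMult ≤ G.minDegree)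
    (hopt : G.rEdgeConn < G.minEdgeDegree) {A B : Finset V} (hA : G.IsRAtom A)
    (hB : G.IsRAtom B) : G.NoIsolated (A \ B) := by
  intro w hw
  by_contra! hw_iso
  obtain ⟨hwA, hwB⟩ := Finset.mem_sdiff.mp hw
  have hBci := hB.1.1.noIsolated_boundary.2
  have hindB := hA.isIndependent_compl_insert hG hδ hopt hB.1 hw hw_iso
  have hAB : A \ B = {w} := Finset.eq_singleton_iff_unique_mem.mpr ⟨hw, fun x hx =>
    by_contra fun hxw => hw_iso x hx <| adj_comm.mp <|
      hBci.adj_of_isIndependent hindB (by simp [hxw, (Finset.mem_sdiff.mp hx).2])⟩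
  obtain ⟨z, hBA⟩ : ∃ z, B \ A = {z} := Finset.card_eq_one.mp <| by
    rw [← Finset.card_sdiff_comm (le_antisymm (hA.2 B hB.1) (hB.2 A hA.1)), hAB,
      Finset.card_singleton]
  have hz : z ∈ B \ A := hBA ▸ Finset.mem_singleton_self z
  have hindA := hB.isIndependent_compl_insert hG hδ hopt hA.1 hz (by simp [hBA, not_adj_self])
  have hAci := hA.1.1.noIsolated_boundary.2
  obtain ⟨y, hy⟩ := hA.exists_notMem_insert hG hopt z
  obtain ⟨hyz, hyA⟩ : y ≠ z ∧ y ∉ A := by simpa using hy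
  have hyB : y ∉ B := fun hyB =>
    hyz (Finset.mem_singleton.mp (hBA ▸ Finset.mem_sdiff.mpr ⟨hyB, hyA⟩))
  have hyw : y ∉ insert w B := by simpa [hyB] using fun h : y = w => hyA (h ▸ hwA)
  have hcut := G.cut_pair_add_cut_pair_le hAB hBA hyA hyB fun v hvA hvB =>
    Nat.eq_zero_of_not_pos <| hindB y (Finset.mem_compl.mpr hyw) v
      (by simpa [hvB] using fun h : v = w => hvA (h ▸ hwA))
  have := G.minEdgeDegree_le_cut_pair (hBci.adj_of_isIndependent hindB hyw)
  have := G.minEdgeDegree_le_cut_pair (hAci.adj_of_isIndependent hindA hy)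
  have := hA.1.2
  have := hB.1.2
  omega

lemma IsRAtom.cut_lt_cut_sdiff (hG : G.Connected) (hδ : 2 * G.maxMult ≤ G.minDegree)
    (hopt : G.rEdgeConn < G.minEdgeDegree) {A B : Finset V} (hA : G.IsRAtom A)
    (hB : G.IsRAtom B) (hAB : A ≠ B) {x : V} (hxA : x ∈ A) (hxB : x ∈ B) :
    G.cut A < G.cut (A \ B) := by
  have hAci := hA.1.1.noIsolated_boundary.2
  have hBi := hB.1.1.noIsolated_boundary.1
  have hne : (A \ B).Nonempty := Finset.sdiff_nonempty.mpr fun hsub =>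
    hAB (Finset.eq_of_subset_of_card_le hsub (hB.2 A hA.1))
  have hci : G.NoIsolated (A \ B)ᶜ := by
    intro v hv
    by_cases hvB : v ∈ B
    · obtain ⟨u, hu, hvu⟩ := hBi v hvB
      exact ⟨u, by simp [hu], hvu⟩
    · obtain ⟨u, hu, hvu⟩ := hAci v (by simpa [hvB] using hv)
      exact ⟨u, by simpa using fun h => absurd h (Finset.mem_compl.mp hu), hvu⟩
  refine hA.cut_lt (isRestrictedEdgeCut_boundary hne ⟨x, by simp [hxB]⟩
    (hA.noIsolated_sdiff hG hδ hopt hB) hci) ?_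
  have := Finset.card_sdiff_add_card_inter A B
  have := Finset.card_pos.mpr ⟨x, Finset.mem_inter.mpr ⟨hxA, hxB⟩⟩
  omega

end Multigraph

theorem rAtoms_disjoint_general (G : Multigraph V)
    (hG : G.Connected)
    (hδ : 2 * G.maxMult ≤ G.minDegree)
    (hopt : G.rEdgeConn < G.minEdgeDegree)
    (A B : Finset V) (hA : G.IsRAtom A) (hB : G.IsRAtom B) (hAB : A ≠ B) :
    A.card = B.card ∧ 3 ≤ A.card ∧ Disjoint A B := by
  refine ⟨le_antisymm (hA.2 B hB.1) (hB.2 A hA.1), hA.1.three_le_card hG hopt,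
    Finset.disjoint_left.mpr fun x hxA hxB => ?_⟩
  have := hA.cut_lt_cut_sdiff hG hδ hopt hB hAB hxA hxB
  have := hB.cut_lt_cut_sdiff hG hδ hopt hA hAB.symm hxB hxA
  have := G.cut_sdiff_add_cut_sdiff_le A B
  omega

/-- In a connected half-transitive multigraph with `δ(G) ≥ 2μ(G)` which is not `λ'`-optimal,
any two distinct `λ'`-atoms `A`, `B` satisfy `|A| = |B| ≥ 3` and `A ∩ B = ∅`. -/
theorem rAtoms_disjoint (G : Multigraph V) (V₁ V₂ : Finset V)
    (hG : G.Connected) (hht : G.IsHalfTransitive V₁ V₂)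
    (hδ : 2 * G.maxMult ≤ G.minDegree)
    (hopt : G.rEdgeConn < G.minEdgeDegree)
    (A B : Finset V) (hA : G.IsRAtom A) (hB : G.IsRAtom B) (hAB : A ≠ B) :
    A.card = B.card ∧ 3 ≤ A.card ∧ Disjoint A B :=
  rAtoms_disjoint_general G hG hδ hopt A B hA hB hAB
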